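/- Fix h > 0 and a real number x_{i+1/2}, and for each integer ℓ let I_ℓ = [x_{i+1/2} + (ℓ − i − 1)h, x_{i+1/2} + (ℓ − i)h] denote the cell of width h with center x_ℓ. Let p be the polynomial of degree at most 5 matching the zeroth- and first-order moments (ū_ℓ, v̄_ℓ) on the stencil {I_{i−1}, I_i, I_{i+1}}, and let q be the polynomial of degree at most 5 matching the zeroth- and first-order moments (ū_ℓ, v̄_ℓ) on the stencil {I_i, I_{i+1}, I_{i+2}}, where the zeroth-order moment of a polynomial over a cell I_ℓ is (1/h)∫_{I_ℓ} p dx = ū_ℓ and the first-order moment is (1/h)∫_{I_ℓ} p(x)(x − x_ℓ)/h dx = v̄_ℓ. Then the jumps across the interface x_{i+1/2} satisfy q(x_{i+1/2}) − p(x_{i+1/2}) = (−13ū_{i−1} − 31ū_i + 31ū_{i+1} + 13ū_{i+2} − 50v̄_{i−1} − 370v̄_i − 370v̄_{i+1} − 50v̄_{i+2})/108 and q′(x_{i+1/2}) − p′(x_{i+1/2}) = (−5ū_{i−1} + 5ū_i + 5ū_{i+1} − 5ū_{i+2} − 22v̄_{i−1} − 54v̄_i + 54v̄_{i+1} + 22v̄_{i+2})/(36h).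 -/

import Mathlib

open MeasureTheory

/-- Left endpoint of the cell `I_ℓ = [x_{i+1/2} + (ℓ-i-1)h, x_{i+1/2} + (ℓ-i)h]`. -/
noncomputable def cellLeft (xhalf h : ℝ) (i ℓ : ℤ) : ℝ :=
  xhalf + ((ℓ : ℝ) - (i : ℝ) - 1) * h

/-- Right endpoint of the cell `I_ℓ`. -/
noncomputable def cellRight (xhalf h : ℝ) (i ℓ : ℤ) : ℝ :=
  xhalf + ((ℓ : ℝ) - (i : ℝ)) * h

/-- Center `x_ℓ = x_{i+1/2} + (ℓ-i-1/2)h` of the cell `I_ℓ`. -/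
noncomputable def cellCenter (xhalf h : ℝ) (i ℓ : ℤ) : ℝ :=
  xhalf + ((ℓ : ℝ) - (i : ℝ) - 1 / 2) * h

/-- The polynomial `p` matches the zeroth-order moment `ū_ℓ` and the first-order moment
`v̄_ℓ` on every cell `I_ℓ` with `ℓ ∈ S`. -/
def MatchesMoments (xhalf h : ℝ) (i : ℤ) (S : Set ℤ) (ub vb : ℤ → ℝ)
    (p : Polynomial ℝ) : Prop :=
  ∀ ℓ ∈ S,
    (1 / h) * (∫ x in cellLeft xhalf h i ℓ..cellRight xhalf h i ℓ, p.eval x) = ub ℓ ∧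
    (1 / h) * (∫ x in cellLeft xhalf h i ℓ..cellRight xhalf h i ℓ,
        p.eval x * ((x - cellCenter xhalf h i ℓ) / h)) = vb ℓ

open Polynomial

lemma hasDerivAt_poly7 (e0 e1 e2 e3 e4 e5 e6 x : ℝ) :
    HasDerivAt (fun t : ℝ => e0*t + e1*(t^2/2) + e2*(t^3/3) + e3*(t^4/4)
        + e4*(t^5/5) + e5*(t^6/6) + e6*(t^7/7))
      (e0 + e1*x + e2*x^2 + e3*x^3 + e4*x^4 + e5*x^5 + e6*x^6) x := by
  have h0 : HasDerivAt (fun t : ℝ => e0*t) e0 x := by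
    simpa using (hasDerivAt_id x).const_mul e0
  have h1 : HasDerivAt (fun t : ℝ => e1*(t^2/2)) (e1*x) x := by
    have := ((hasDerivAt_pow 2 x).div_const 2).const_mul e1
    refine this.congr_deriv ?_; push_cast; ring
  have h2 : HasDerivAt (fun t : ℝ => e2*(t^3/3)) (e2*x^2) x := by
    have := ((hasDerivAt_pow 3 x).div_const 3).const_mul e2
    refine this.congr_deriv ?_; push_cast; ring
  have h3 : HasDerivAt (fun t : ℝ => e3*(t^4/4)) (e3*x^3) x := by
    have := ((hasDerivAt_pow 4 x).div_const 4).const_mul e3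
    refine this.congr_deriv ?_; push_cast; ring
  have h4 : HasDerivAt (fun t : ℝ => e4*(t^5/5)) (e4*x^4) x := by
    have := ((hasDerivAt_pow 5 x).div_const 5).const_mul e4
    refine this.congr_deriv ?_; push_cast; ring
  have h5 : HasDerivAt (fun t : ℝ => e5*(t^6/6)) (e5*x^5) x := by
    have := ((hasDerivAt_pow 6 x).div_const 6).const_mul e5
    refine this.congr_deriv ?_; push_cast; ring
  have h6 : HasDerivAt (fun t : ℝ => e6*(t^7/7)) (e6*x^6) x := by
    have := ((hasDerivAt_pow 7 x).div_const 7).const_mul e6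
    refine this.congr_deriv ?_; push_cast; ring
  exact ((((((h0.add h1).add h2).add h3).add h4).add h5).add h6)

lemma integral_poly7 (e0 e1 e2 e3 e4 e5 e6 a b : ℝ) :
    (∫ x in a..b, (e0 + e1*x + e2*x^2 + e3*x^3 + e4*x^4 + e5*x^5 + e6*x^6)) =
      (e0*b + e1*(b^2/2) + e2*(b^3/3) + e3*(b^4/4) + e4*(b^5/5) + e5*(b^6/6) + e6*(b^7/7))
      - (e0*a + e1*(a^2/2) + e2*(a^3/3) + e3*(a^4/4) + e4*(a^5/5) + e5*(a^6/6) + e6*(a^7/7)) := by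
  refine intervalIntegral.integral_eq_sub_of_hasDerivAt
    (fun x _ => hasDerivAt_poly7 e0 e1 e2 e3 e4 e5 e6 x) ?_
  exact (by continuity : Continuous fun x : ℝ => e0 + e1*x + e2*x^2 + e3*x^3 + e4*x^4 + e5*x^5 + e6*x^6).intervalIntegrable a b

/-- zeroth moment primitive value at `t`. -/
noncomputable def F5 (c0 c1 c2 c3 c4 c5 t : ℝ) : ℝ :=
  c0*t + c1*(t^2/2) + c2*(t^3/3) + c3*(t^4/4) + c4*(t^5/5) + c5*(t^6/6)

/-- first moment primitive value at `t` (antiderivative of `(c0+⋯+c5 x^5)(x-M)`). -/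
noncomputable def H5 (c0 c1 c2 c3 c4 c5 M t : ℝ) : ℝ :=
  (-(M*c0))*t + (c0-M*c1)*(t^2/2) + (c1-M*c2)*(t^3/3) + (c2-M*c3)*(t^4/4)
    + (c3-M*c4)*(t^5/5) + (c4-M*c5)*(t^6/6) + c5*(t^7/7)

lemma integral_poly5 (c0 c1 c2 c3 c4 c5 a b : ℝ) :
    (∫ x in a..b, (c0 + c1*x + c2*x^2 + c3*x^3 + c4*x^4 + c5*x^5)) =
      F5 c0 c1 c2 c3 c4 c5 b - F5 c0 c1 c2 c3 c4 c5 a := by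
  have h : (fun x : ℝ => c0 + c1*x + c2*x^2 + c3*x^3 + c4*x^4 + c5*x^5)
      = fun x : ℝ => c0 + c1*x + c2*x^2 + c3*x^3 + c4*x^4 + c5*x^5 + (0:ℝ)*x^6 :=
    funext fun x => by ring
  rw [h, integral_poly7]
  simp only [F5]; ring

lemma integral_poly5_mul (c0 c1 c2 c3 c4 c5 M h a b : ℝ) :
    (∫ x in a..b, (c0 + c1*x + c2*x^2 + c3*x^3 + c4*x^4 + c5*x^5) * ((x - M)/h)) =
      (1/h) * (H5 c0 c1 c2 c3 c4 c5 M b - H5 c0 c1 c2 c3 c4 c5 M a) := by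
  have he : (fun x : ℝ => (c0 + c1*x + c2*x^2 + c3*x^3 + c4*x^4 + c5*x^5) * ((x - M)/h))
      = fun x : ℝ => (1/h) * ((-(M*c0)) + (c0-M*c1)*x + (c1-M*c2)*x^2 + (c2-M*c3)*x^3
          + (c3-M*c4)*x^4 + (c4-M*c5)*x^5 + c5*x^6) :=
    funext fun x => by ring
  rw [he, intervalIntegral.integral_const_mul, integral_poly7]
  simp only [H5]

lemma exists_expand (p : Polynomial ℝ) (hdeg : p.degree ≤ 5) :
    ∃ c0 c1 c2 c3 c4 c5 : ℝ,
      p = C c0 + C c1*X + C c2*X^2 + C c3*X^3 + C c4*X^4 + C c5*X^5 := by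
  refine ⟨p.coeff 0, p.coeff 1, p.coeff 2, p.coeff 3, p.coeff 4, p.coeff 5, ?_⟩
  have hlt : p.natDegree < 6 := lt_of_le_of_lt (natDegree_le_of_degree_le hdeg) (by norm_num)
  conv_lhs => rw [p.as_sum_range' 6 hlt]
  simp [Finset.sum_range_succ, ← C_mul_X_pow_eq_monomial]

/-- **Interface jumps of the piecewise linear Hermite reconstruction**
(formula (eq:jump1) of Theorem 2.1).  If `p` is the quintic polynomial matching the
moments on the stencil `{I_{i-1}, I_i, I_{i+1}}` and `q` the one matching the moments
on the stencil `{I_i, I_{i+1}, I_{i+2}}`, then the jumps of the value and of the first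
derivative across the interface `x_{i+1/2}` are the stated explicit linear
combinations of the moments. -/
theorem hermite_reconstruction_interface_jumps
    (xhalf h : ℝ) (hh : 0 < h) (i : ℤ) (ub vb : ℤ → ℝ) (p q : Polynomial ℝ)
    (hpdeg : p.degree ≤ 5) (hqdeg : q.degree ≤ 5)
    (hp : MatchesMoments xhalf h i ({i - 1, i, i + 1} : Set ℤ) ub vb p)
    (hq : MatchesMoments xhalf h i ({i, i + 1, i + 2} : Set ℤ) ub vb q) :
    q.eval xhalf - p.eval xhalf =
      (-13 * ub (i - 1) - 31 * ub i + 31 * ub (i + 1) + 13 * ub (i + 2)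
        - 50 * vb (i - 1) - 370 * vb i - 370 * vb (i + 1) - 50 * vb (i + 2)) / 108 ∧
    q.derivative.eval xhalf - p.derivative.eval xhalf =
      (-5 * ub (i - 1) + 5 * ub i + 5 * ub (i + 1) - 5 * ub (i + 2)
        - 22 * vb (i - 1) - 54 * vb i + 54 * vb (i + 1) + 22 * vb (i + 2)) / (36 * h) := by
  obtain ⟨c0, c1, c2, c3, c4, c5, hpP⟩ := exists_expand p hpdeg
  obtain ⟨d0, d1, d2, d3, d4, d5, hqP⟩ := exists_expand q hqdeg
  have hpe : ∀ x : ℝ, p.eval x = c0 + c1*x + c2*x^2 + c3*x^3 + c4*x^4 + c5*x^5 := by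
    intro x; rw [hpP]; simp
  have hqe : ∀ x : ℝ, q.eval x = d0 + d1*x + d2*x^2 + d3*x^3 + d4*x^4 + d5*x^5 := by
    intro x; rw [hqP]; simp
  have hpd : p.derivative.eval xhalf
      = c1 + 2*c2*xhalf + 3*c3*xhalf^2 + 4*c4*xhalf^3 + 5*c5*xhalf^4 := by
    rw [hpP]; simp; ring
  have hqd : q.derivative.eval xhalf
      = d1 + 2*d2*xhalf + 3*d3*xhalf^2 + 4*d4*xhalf^3 + 5*d5*xhalf^4 := by
    rw [hqP]; simp; ring
  obtain ⟨huPim1, hvPim1⟩ := hp (i - 1) (by simp)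
  simp only [hpe] at huPim1 hvPim1
  rw [integral_poly5] at huPim1
  rw [integral_poly5_mul] at hvPim1
  have EuPim1 : F5 c0 c1 c2 c3 c4 c5 (cellRight xhalf h i (i - 1)) - F5 c0 c1 c2 c3 c4 c5 (cellLeft xhalf h i (i - 1))
      = h * ub (i - 1) := by
    rw [← huPim1]; field_simp
  have EvPim1 : H5 c0 c1 c2 c3 c4 c5 (cellCenter xhalf h i (i - 1)) (cellRight xhalf h i (i - 1))
      - H5 c0 c1 c2 c3 c4 c5 (cellCenter xhalf h i (i - 1)) (cellLeft xhalf h i (i - 1))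
      = h^2 * vb (i - 1) := by
    rw [← hvPim1]; field_simp
  simp only [F5, H5, cellLeft, cellRight, cellCenter] at EuPim1 EvPim1
  push_cast at EuPim1 EvPim1
  obtain ⟨huPi0, hvPi0⟩ := hp i (by simp)
  simp only [hpe] at huPi0 hvPi0
  rw [integral_poly5] at huPi0
  rw [integral_poly5_mul] at hvPi0
  have EuPi0 : F5 c0 c1 c2 c3 c4 c5 (cellRight xhalf h i i) - F5 c0 c1 c2 c3 c4 c5 (cellLeft xhalf h i i)
      = h * ub i := by
    rw [← huPi0]; field_simp
  have EvPi0 : H5 c0 c1 c2 c3 c4 c5 (cellCenter xhalf h i i) (cellRight xhalf h i i)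
      - H5 c0 c1 c2 c3 c4 c5 (cellCenter xhalf h i i) (cellLeft xhalf h i i)
      = h^2 * vb i := by
    rw [← hvPi0]; field_simp
  simp only [F5, H5, cellLeft, cellRight, cellCenter] at EuPi0 EvPi0
  try push_cast at EuPi0 EvPi0
  obtain ⟨huPip1, hvPip1⟩ := hp (i + 1) (by simp)
  simp only [hpe] at huPip1 hvPip1
  rw [integral_poly5] at huPip1
  rw [integral_poly5_mul] at hvPip1
  have EuPip1 : F5 c0 c1 c2 c3 c4 c5 (cellRight xhalf h i (i + 1)) - F5 c0 c1 c2 c3 c4 c5 (cellLeft xhalf h i (i + 1))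
      = h * ub (i + 1) := by
    rw [← huPip1]; field_simp
  have EvPip1 : H5 c0 c1 c2 c3 c4 c5 (cellCenter xhalf h i (i + 1)) (cellRight xhalf h i (i + 1))
      - H5 c0 c1 c2 c3 c4 c5 (cellCenter xhalf h i (i + 1)) (cellLeft xhalf h i (i + 1))
      = h^2 * vb (i + 1) := by
    rw [← hvPip1]; field_simp
  simp only [F5, H5, cellLeft, cellRight, cellCenter] at EuPip1 EvPip1
  push_cast at EuPip1 EvPip1
  obtain ⟨huQi0, hvQi0⟩ := hq i (by simp)
  simp only [hqe] at huQi0 hvQi0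
  rw [integral_poly5] at huQi0
  rw [integral_poly5_mul] at hvQi0
  have EuQi0 : F5 d0 d1 d2 d3 d4 d5 (cellRight xhalf h i i) - F5 d0 d1 d2 d3 d4 d5 (cellLeft xhalf h i i)
      = h * ub i := by
    rw [← huQi0]; field_simp
  have EvQi0 : H5 d0 d1 d2 d3 d4 d5 (cellCenter xhalf h i i) (cellRight xhalf h i i)
      - H5 d0 d1 d2 d3 d4 d5 (cellCenter xhalf h i i) (cellLeft xhalf h i i)
      = h^2 * vb i := by
    rw [← hvQi0]; field_simp
  simp only [F5, H5, cellLeft, cellRight, cellCenter] at EuQi0 EvQi0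
  try push_cast at EuQi0 EvQi0
  obtain ⟨huQip1, hvQip1⟩ := hq (i + 1) (by simp)
  simp only [hqe] at huQip1 hvQip1
  rw [integral_poly5] at huQip1
  rw [integral_poly5_mul] at hvQip1
  have EuQip1 : F5 d0 d1 d2 d3 d4 d5 (cellRight xhalf h i (i + 1)) - F5 d0 d1 d2 d3 d4 d5 (cellLeft xhalf h i (i + 1))
      = h * ub (i + 1) := by
    rw [← huQip1]; field_simp
  have EvQip1 : H5 d0 d1 d2 d3 d4 d5 (cellCenter xhalf h i (i + 1)) (cellRight xhalf h i (i + 1))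
      - H5 d0 d1 d2 d3 d4 d5 (cellCenter xhalf h i (i + 1)) (cellLeft xhalf h i (i + 1))
      = h^2 * vb (i + 1) := by
    rw [← hvQip1]; field_simp
  simp only [F5, H5, cellLeft, cellRight, cellCenter] at EuQip1 EvQip1
  push_cast at EuQip1 EvQip1
  obtain ⟨huQip2, hvQip2⟩ := hq (i + 2) (by simp)
  simp only [hqe] at huQip2 hvQip2
  rw [integral_poly5] at huQip2
  rw [integral_poly5_mul] at hvQip2
  have EuQip2 : F5 d0 d1 d2 d3 d4 d5 (cellRight xhalf h i (i + 2)) - F5 d0 d1 d2 d3 d4 d5 (cellLeft xhalf h i (i + 2))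
      = h * ub (i + 2) := by
    rw [← huQip2]; field_simp
  have EvQip2 : H5 d0 d1 d2 d3 d4 d5 (cellCenter xhalf h i (i + 2)) (cellRight xhalf h i (i + 2))
      - H5 d0 d1 d2 d3 d4 d5 (cellCenter xhalf h i (i + 2)) (cellLeft xhalf h i (i + 2))
      = h^2 * vb (i + 2) := by
    rw [← hvQip2]; field_simp
  simp only [F5, H5, cellLeft, cellRight, cellCenter] at EuQip2 EvQip2
  push_cast at EuQip2 EvQip2
  constructor
  · have key : (q.eval xhalf - p.eval xhalf) * h^2 =
        ((-13 * ub (i - 1) - 31 * ub i + 31 * ub (i + 1) + 13 * ub (i + 2)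
          - 50 * vb (i - 1) - 370 * vb i - 370 * vb (i + 1) - 50 * vb (i + 2)) / 108) * h^2 := by
      rw [hpe xhalf, hqe xhalf]
      linear_combination (8/27*h) * EuQi0 + (7/12*h) * EuQip1 + (13/108*h) * EuQip2
        + (28/27) * EvQi0 + (-241/54) * EvQip1 + (-25/54) * EvQip2
        + (-13/108*h) * EuPim1 + (-7/12*h) * EuPi0 + (-8/27*h) * EuPip1
        + (-25/54) * EvPim1 + (-241/54) * EvPi0 + (28/27) * EvPip1
    exact mul_right_cancel₀ (pow_ne_zero 2 hh.ne') key
  · rw [eq_div_iff (by positivity : (36:ℝ) * h ≠ 0)]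
    have key : ((q.derivative.eval xhalf - p.derivative.eval xhalf) * (36 * h)) * h^2 =
        (-5 * ub (i - 1) + 5 * ub i + 5 * ub (i + 1) - 5 * ub (i + 2)
          - 22 * vb (i - 1) - 54 * vb i + 54 * vb (i + 1) + 22 * vb (i + 2)) * h^2 := by
      rw [hpd, hqd]
      linear_combination (-76*h) * EuQi0 + (81*h) * EuQip1 + (-5*h) * EuQip2
        + (-248) * EvQi0 + (-194) * EvQip1 + 22 * EvQip2
        + (-5*h) * EuPim1 + (81*h) * EuPi0 + (-76*h) * EuPip1
        + (-22) * EvPim1 + 194 * EvPi0 + 248 * EvPip1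
    exact mul_right_cancel₀ (pow_ne_zero 2 hh.ne') key
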